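/- For every finite poset P and natural number m, d(P)^m = Σ_{U} e(m, P|_U), where the sum ranges over all upsets U of P (including the empty upset and P itself) and P|_U is the poset induced on U. Equivalently, d(P)^m − e(m,P) = Σ_{U ⊊ ground set of P, U an upset} e(m, P|_U). -/
import Mathlib


open scoped Classical

variable {α : Type*} [DecidableEq α]

/-- `q` is a partial order relation with ground set `S`: it is a set of pairs
contained in `S × S`, reflexive on `S`, transitive and antisymmetric. -/
def IsPOon (S : Finset α) (q : Finset (α × α)) : Prop :=
  q ⊆ S ×ˢ S ∧ (∀ x ∈ S, (x, x) ∈ q) ∧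
  (∀ x y z : α, (x, y) ∈ q → (y, z) ∈ q → (x, z) ∈ q) ∧
  (∀ x y : α, (x, y) ∈ q → (y, x) ∈ q → x = y)

/-- The relation induced on a subset `A` of the ground set. -/
def restrictRel (q : Finset (α × α)) (A : Finset α) : Finset (α × α) :=
  q.filter fun r => r.1 ∈ A ∧ r.2 ∈ A

/-- The downsets of the poset `(S, q)`. -/
noncomputable def downsets (S : Finset α) (q : Finset (α × α)) : Finset (Finset α) :=
  S.powerset.filter fun D => ∀ y ∈ D, ∀ x : α, (x, y) ∈ q → x ∈ D

/-- `d(P)`, the number of downsets of the poset `(S, q)`. -/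
noncomputable def dnum (S : Finset α) (q : Finset (α × α)) : ℕ :=
  (downsets S q).card

/-- The upsets of the poset `(S, q)`. -/
noncomputable def upsets (S : Finset α) (q : Finset (α × α)) : Finset (Finset α) :=
  S.powerset.filter fun U => ∀ x ∈ U, ∀ y : α, (x, y) ∈ q → y ∈ U

/-- Down-closure `QA = {x : x ≤_Q a for some a ∈ A}`. -/
def dcl (q : Finset (α × α)) (A : Finset α) : Finset α :=
  (q.filter fun r => r.2 ∈ A).image Prod.fst

/-- Up-closure `AQ = {y : a ≤_Q y for some a ∈ A}`. -/
def ucl (q : Finset (α × α)) (A : Finset α) : Finset α :=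
  (q.filter fun r => r.1 ∈ A).image Prod.snd

/-- The set of minimal elements of the poset `(S, q)`. -/
noncomputable def minset (S : Finset α) (q : Finset (α × α)) : Finset α :=
  S.filter fun x => ∀ y : α, (y, x) ∈ q → y = x

/-- `E(M, P)`: the partial orders on `M ∪ K` inducing `p` on `K` whose set of
minimal elements is exactly `M`. -/
noncomputable def extPOs (M K : Finset α) (p : Finset (α × α)) :
    Finset (Finset (α × α)) :=
  ((M ∪ K) ×ˢ (M ∪ K)).powerset.filter fun q =>
    IsPOon (M ∪ K) q ∧ restrictRel q K = p ∧ minset (M ∪ K) q = M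

/-- `A` is an antichain of the poset `(S, q)`. -/
def isAntichain (S : Finset α) (q : Finset (α × α)) (A : Finset α) : Prop :=
  A ⊆ S ∧ ∀ x ∈ A, ∀ y ∈ A, (x, y) ∈ q → x = y

/-- The posets `(S, q)` and `(T, r)` are order-isomorphic. -/
def POIso {β : Type*} (S : Finset α) (q : Finset (α × α))
    (T : Finset β) (r : Finset (β × β)) : Prop :=
  ∃ f : α → β, Set.BijOn f ↑S ↑T ∧ ∀ x ∈ S, ∀ y ∈ S, ((x, y) ∈ q ↔ (f x, f y) ∈ r)

/-- `C` is a chain of the poset `(S, q)`. -/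
def isChainOn (S : Finset α) (q : Finset (α × α)) (C : Finset α) : Prop :=
  C ⊆ S ∧ ∀ x ∈ C, ∀ y ∈ C, (x, y) ∈ q ∨ (y, x) ∈ q

/-- The height of the poset `(S, q)`: the maximal size of a chain. -/
noncomputable def heightP (S : Finset α) (q : Finset (α × α)) : ℕ :=
  (S.powerset.filter (isChainOn S q)).sup Finset.card

section Aux

lemma mem_restrictRel {q : Finset (α × α)} {A : Finset α} {x y : α} :
    (x, y) ∈ restrictRel q A ↔ (x, y) ∈ q ∧ x ∈ A ∧ y ∈ A := by
  simp [restrictRel]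

lemma mem_downsets {S : Finset α} {q : Finset (α × α)} {D : Finset α} :
    D ∈ downsets S q ↔ D ⊆ S ∧ ∀ y ∈ D, ∀ x : α, (x, y) ∈ q → x ∈ D := by
  simp [downsets]

lemma mem_upsets {S : Finset α} {q : Finset (α × α)} {U : Finset α} :
    U ∈ upsets S q ↔ U ⊆ S ∧ ∀ x ∈ U, ∀ y : α, (x, y) ∈ q → y ∈ U := by
  simp [upsets]

lemma mem_minset {S : Finset α} {q : Finset (α × α)} {x : α} :
    x ∈ minset S q ↔ x ∈ S ∧ ∀ y, (y, x) ∈ q → y = x := by simp [minset]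

lemma mem_extPOs {M K₀ : Finset α} {p₀ Q : Finset (α × α)} :
    Q ∈ extPOs M K₀ p₀ ↔ Q ⊆ (M ∪ K₀) ×ˢ (M ∪ K₀) ∧ IsPOon (M ∪ K₀) Q ∧
      restrictRel Q K₀ = p₀ ∧ minset (M ∪ K₀) Q = M := by
  unfold extPOs
  rw [Finset.mem_filter, Finset.mem_powerset]

/-- In a finite poset, every element has a minimal element below it. -/
lemma exists_min_below {S : Finset α} {q : Finset (α × α)} (hq : IsPOon S q) :
    ∀ y ∈ S, ∃ x ∈ minset S q, (x, y) ∈ q := by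
  obtain ⟨hsub, hrefl, htrans, hanti⟩ := hq
  have key : ∀ n : ℕ, ∀ y ∈ S, (S.filter fun z => (z, y) ∈ q).card ≤ n →
      ∃ x ∈ minset S q, (x, y) ∈ q := by
    intro n
    induction n with
    | zero =>
      intro y hy hc
      exfalso
      have : y ∈ S.filter fun z => (z, y) ∈ q :=
        Finset.mem_filter.2 ⟨hy, hrefl y hy⟩
      have := Finset.card_pos.2 ⟨y, this⟩
      omega
    | succ n ih =>
      intro y hy hc
      by_cases hmin : ∀ z, (z, y) ∈ q → z = y
      · exact ⟨y, mem_minset.2 ⟨hy, hmin⟩, hrefl y hy⟩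
      · push_neg at hmin
        obtain ⟨z, hzy, hzney⟩ := hmin
        have hzS : z ∈ S := (Finset.mem_product.1 (hsub hzy)).1
        have hss : (S.filter fun w => (w, z) ∈ q) ⊂ S.filter fun w => (w, y) ∈ q := by
          constructor
          · intro w hw
            rw [Finset.mem_filter] at hw ⊢
            exact ⟨hw.1, htrans w z y hw.2 hzy⟩
          · intro hcon
            have hyy : y ∈ S.filter fun w => (w, y) ∈ q :=
              Finset.mem_filter.2 ⟨hy, hrefl y hy⟩
            have := (Finset.mem_filter.1 (hcon hyy)).2
            exact hzney (hanti z y hzy this)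
        have hlt := Finset.card_lt_card hss
        obtain ⟨x, hx, hxz⟩ := ih z hzS (by omega)
        exact ⟨x, hx, htrans x z y hxz hzy⟩
  intro y hy
  exact key _ y hy le_rfl

/-- The downset `D_a = {y ∈ K : a ≰_Q y}` associated to a minimal element `a`. -/
noncomputable def fOf (K : Finset α) (Q : Finset (α × α)) (a : α) : Finset α :=
  K.filter fun y => (a, y) ∉ Q

/-- The upset `U = ⋃_{a ∈ M} (K \ D_a)` associated to a tuple of downsets. -/
noncomputable def UOf (M K : Finset α) (f : ∀ a ∈ M, Finset α) : Finset α :=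
  M.attach.biUnion fun a => K \ f a.1 a.2

/-- The extension poset associated to a tuple of downsets. -/
noncomputable def QOf (M K : Finset α) (p : Finset (α × α)) (f : ∀ a ∈ M, Finset α) :
    Finset (α × α) :=
  restrictRel p (UOf M K f) ∪
    M.attach.biUnion fun a =>
      insert (a.1, a.1) ((K \ f a.1 a.2).image fun z => (a.1, z))

lemma mem_UOf {M K : Finset α} {f : ∀ a ∈ M, Finset α} {y : α} :
    y ∈ UOf M K f ↔ ∃ (a : α) (ha : a ∈ M), y ∈ K \ f a ha := by
  unfold UOf
  rw [Finset.mem_biUnion]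
  constructor
  · rintro ⟨⟨a, ha⟩, -, h⟩
    exact ⟨a, ha, h⟩
  · rintro ⟨a, ha, h⟩
    exact ⟨⟨a, ha⟩, Finset.mem_attach _ _, h⟩

lemma mem_QOf {M K : Finset α} {p : Finset (α × α)} {f : ∀ a ∈ M, Finset α} {x y : α} :
    (x, y) ∈ QOf M K p f ↔
      (x, y) ∈ restrictRel p (UOf M K f) ∨ ∃ hx : x ∈ M, y = x ∨ y ∈ K \ f x hx := by
  unfold QOf
  rw [Finset.mem_union]
  refine or_congr Iff.rfl ?_
  rw [Finset.mem_biUnion]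
  constructor
  · rintro ⟨⟨a, ha⟩, -, h⟩
    rw [Finset.mem_insert] at h
    rcases h with h | h
    · obtain ⟨h1, h2⟩ := Prod.mk.injEq .. ▸ h
      subst h1
      exact ⟨ha, Or.inl h2⟩
    · rw [Finset.mem_image] at h
      obtain ⟨z, hz, hzeq⟩ := h
      obtain ⟨h1, h2⟩ := Prod.mk.injEq .. ▸ hzeq.symm
      subst h1; subst h2
      exact ⟨ha, Or.inr hz⟩
  · rintro ⟨hx, h | h⟩
    · exact ⟨⟨x, hx⟩, Finset.mem_attach _ _, by rw [h]; exact Finset.mem_insert_self _ _⟩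
    · exact ⟨⟨x, hx⟩, Finset.mem_attach _ _,
        Finset.mem_insert_of_mem (Finset.mem_image.2 ⟨y, h, rfl⟩)⟩

section Inverse

variable {M K U : Finset α} {p Q : Finset (α × α)}

lemma fOf_mem_downsets (hMK : Disjoint M K) (hp : IsPOon K p)
    (hU : U ∈ upsets K p) (hQ : Q ∈ extPOs M U (restrictRel p U)) (a : α) :
    fOf K Q a ∈ downsets K p := by
  obtain ⟨hUK, hUup⟩ := mem_upsets.1 hU
  obtain ⟨hQsub, ⟨hQsq, hQrefl, hQtrans, hQanti⟩, hQres, hQmin⟩ := mem_extPOs.1 hQ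
  rw [mem_downsets]
  refine ⟨Finset.filter_subset _ _, ?_⟩
  intro y hy x hxy
  rw [fOf, Finset.mem_filter] at hy ⊢
  have hxK : x ∈ K := (Finset.mem_product.1 (hp.1 hxy)).1
  refine ⟨hxK, fun hax => ?_⟩
  have hxMU : x ∈ M ∪ U := (Finset.mem_product.1 (hQsq hax)).2
  have hxU : x ∈ U := by
    rcases Finset.mem_union.1 hxMU with h | h
    · exact absurd hxK (Finset.disjoint_left.1 hMK h)
    · exact h
  have hyU : y ∈ U := hUup x hxU y hxy
  have hxyQ : (x, y) ∈ Q := by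
    have h1 : (x, y) ∈ restrictRel p U := mem_restrictRel.2 ⟨hxy, hxU, hyU⟩
    rw [← hQres] at h1
    exact (mem_restrictRel.1 h1).1
  exact hy.2 (hQtrans a x y hax hxyQ)

lemma UOf_fOf (hMK : Disjoint M K) (hU : U ∈ upsets K p)
    (hQ : Q ∈ extPOs M U (restrictRel p U)) :
    UOf M K (fun a _ => fOf K Q a) = U := by
  obtain ⟨hUK, hUup⟩ := mem_upsets.1 hU
  obtain ⟨hQsub, hQpo, hQres, hQmin⟩ := mem_extPOs.1 hQ
  ext y
  rw [mem_UOf]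
  constructor
  · rintro ⟨a, ha, hy⟩
    rw [Finset.mem_sdiff, fOf, Finset.mem_filter] at hy
    have hay : (a, y) ∈ Q := by
      by_contra hcon
      exact hy.2 ⟨hy.1, hcon⟩
    have hyMU : y ∈ M ∪ U := (Finset.mem_product.1 (hQsub hay)).2
    rcases Finset.mem_union.1 hyMU with h | h
    · exact absurd hy.1 (Finset.disjoint_left.1 hMK h)
    · exact h
  · intro hyU
    have hyK : y ∈ K := hUK hyU
    obtain ⟨a, hamin, hay⟩ := exists_min_below hQpo y (Finset.mem_union_right _ hyU)
    rw [hQmin] at hamin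
    refine ⟨a, hamin, ?_⟩
    rw [Finset.mem_sdiff, fOf, Finset.mem_filter]
    exact ⟨hyK, fun hcon => hcon.2 hay⟩

lemma QOf_fOf (hMK : Disjoint M K) (hU : U ∈ upsets K p)
    (hQ : Q ∈ extPOs M U (restrictRel p U)) :
    QOf M K p (fun a _ => fOf K Q a) = Q := by
  obtain ⟨hUK, hUup⟩ := mem_upsets.1 hU
  obtain ⟨hQsub, ⟨hQsq, hQrefl, hQtrans, hQanti⟩, hQres, hQmin⟩ := mem_extPOs.1 hQ
  have hUeq : UOf M K (fun a _ => fOf K Q a) = U := UOf_fOf hMK hU hQ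
  ext r
  obtain ⟨x, y⟩ := r
  rw [mem_QOf, hUeq]
  constructor
  · rintro (h | ⟨hx, h | h⟩)
    · rw [← hQres] at h
      exact (mem_restrictRel.1 h).1
    · rw [h]
      exact hQrefl x (Finset.mem_union_left _ hx)
    · rw [Finset.mem_sdiff, fOf, Finset.mem_filter] at h
      by_contra hcon
      exact h.2 ⟨h.1, hcon⟩
  · intro hxy
    obtain ⟨hxMU, hyMU⟩ := Finset.mem_product.1 (hQsub hxy)
    rcases Finset.mem_union.1 hxMU with hx | hx
    · rcases Finset.mem_union.1 hyMU with hy | hy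
      · have : x = y := by
          rw [← hQmin, mem_minset] at hy
          exact hy.2 x hxy
        exact Or.inr ⟨hx, Or.inl this.symm⟩
      · refine Or.inr ⟨hx, Or.inr ?_⟩
        rw [Finset.mem_sdiff, fOf, Finset.mem_filter]
        exact ⟨hUK hy, fun hcon => hcon.2 hxy⟩
    · rcases Finset.mem_union.1 hyMU with hy | hy
      · have hxeqy : x = y := by
          rw [← hQmin, mem_minset] at hy
          exact hy.2 x hxy
        exact absurd (hUK hx) (Finset.disjoint_left.1 hMK (hxeqy ▸ hy))
      · refine Or.inl ?_
        rw [← hQres]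
        exact mem_restrictRel.2 ⟨hxy, hx, hy⟩

end Inverse

section Forward

variable {M K : Finset α} {p : Finset (α × α)} {f : ∀ a ∈ M, Finset α}

lemma UOf_mem_upsets (hp : IsPOon K p)
    (hf : ∀ a (ha : a ∈ M), f a ha ∈ downsets K p) :
    UOf M K f ∈ upsets K p := by
  rw [mem_upsets]
  constructor
  · intro y hy
    obtain ⟨a, ha, hy⟩ := mem_UOf.1 hy
    exact (Finset.mem_sdiff.1 hy).1
  · intro x hx y hxy
    obtain ⟨a, ha, hx⟩ := mem_UOf.1 hx
    rw [Finset.mem_sdiff] at hx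
    have hyK : y ∈ K := (Finset.mem_product.1 (hp.1 hxy)).2
    refine mem_UOf.2 ⟨a, ha, Finset.mem_sdiff.2 ⟨hyK, fun hyf => ?_⟩⟩
    exact hx.2 ((mem_downsets.1 (hf a ha)).2 y hyf x hxy)

lemma UOf_subset (hf : ∀ a (ha : a ∈ M), f a ha ∈ downsets K p) :
    UOf M K f ⊆ K := by
  intro y hy
  obtain ⟨a, ha, hy⟩ := mem_UOf.1 hy
  exact (Finset.mem_sdiff.1 hy).1

lemma QOf_mem_extPOs (hMK : Disjoint M K) (hp : IsPOon K p)
    (hf : ∀ a (ha : a ∈ M), f a ha ∈ downsets K p) :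
    QOf M K p f ∈ extPOs M (UOf M K f) (restrictRel p (UOf M K f)) := by
  obtain ⟨hpsq, hprefl, hptrans, hpanti⟩ := hp
  set U := UOf M K f with hUdef
  have hUK : U ⊆ K := UOf_subset hf
  have hUup : ∀ x ∈ U, ∀ y : α, (x, y) ∈ p → y ∈ U :=
    (mem_upsets.1 (UOf_mem_upsets ⟨hpsq, hprefl, hptrans, hpanti⟩ hf)).2
  have hMnotU : ∀ x ∈ M, x ∉ U := fun x hx hxU =>
    Finset.disjoint_left.1 hMK hx (hUK hxU)
  have hsq : QOf M K p f ⊆ (M ∪ U) ×ˢ (M ∪ U) := by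
    intro r hr
    obtain ⟨x, y⟩ := r
    rw [Finset.mem_product]
    rcases mem_QOf.1 hr with h | ⟨hx, h | h⟩
    · obtain ⟨-, hx, hy⟩ := mem_restrictRel.1 h
      exact ⟨Finset.mem_union_right _ hx, Finset.mem_union_right _ hy⟩
    · rw [h]
      exact ⟨Finset.mem_union_left _ hx, Finset.mem_union_left _ hx⟩
    · exact ⟨Finset.mem_union_left _ hx,
        Finset.mem_union_right _ (mem_UOf.2 ⟨x, hx, h⟩)⟩
  rw [mem_extPOs]
  unfold IsPOon
  refine ⟨hsq, ⟨hsq, ?_, ?_, ?_⟩, ?_, ?_⟩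
  · -- reflexivity
    intro x hx
    rcases Finset.mem_union.1 hx with hx | hx
    · exact mem_QOf.2 (Or.inr ⟨hx, Or.inl rfl⟩)
    · exact mem_QOf.2 (Or.inl (mem_restrictRel.2 ⟨hprefl x (hUK hx), hx, hx⟩))
  · -- transitivity
    intro x y z hxy hyz
    rcases mem_QOf.1 hxy with h1 | ⟨hxM, h1⟩
    · obtain ⟨hxyp, hxU, hyU⟩ := mem_restrictRel.1 h1
      rcases mem_QOf.1 hyz with h2 | ⟨hyM, -⟩
      · obtain ⟨hyzp, -, hzU⟩ := mem_restrictRel.1 h2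
        exact mem_QOf.2 (Or.inl (mem_restrictRel.2 ⟨hptrans x y z hxyp hyzp, hxU, hzU⟩))
      · exact absurd hyU (hMnotU y hyM)
    · rcases h1 with h1 | h1
      · rw [h1] at hyz
        exact hyz
      · rw [Finset.mem_sdiff] at h1
        have hyU : y ∈ U := mem_UOf.2 ⟨x, hxM, Finset.mem_sdiff.2 h1⟩
        rcases mem_QOf.1 hyz with h2 | ⟨hyM, -⟩
        · obtain ⟨hyzp, -, hzU⟩ := mem_restrictRel.1 h2
          have hzK : z ∈ K := (Finset.mem_product.1 (hpsq hyzp)).2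
          refine mem_QOf.2 (Or.inr ⟨hxM, Or.inr (Finset.mem_sdiff.2 ⟨hzK, fun hzf => ?_⟩)⟩)
          exact h1.2 ((mem_downsets.1 (hf x hxM)).2 z hzf y hyzp)
        · exact absurd hyM (Finset.disjoint_right.1 hMK h1.1)
  · -- antisymmetry
    intro x y hxy hyx
    rcases mem_QOf.1 hxy with h1 | ⟨hxM, h1⟩
    · obtain ⟨hxyp, hxU, hyU⟩ := mem_restrictRel.1 h1
      rcases mem_QOf.1 hyx with h2 | ⟨hyM, -⟩
      · exact hpanti x y hxyp (mem_restrictRel.1 h2).1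
      · exact absurd hyU (hMnotU y hyM)
    · rcases h1 with h1 | h1
      · exact h1.symm
      · rw [Finset.mem_sdiff] at h1
        rcases mem_QOf.1 hyx with h2 | ⟨hyM, -⟩
        · obtain ⟨-, -, hxU⟩ := mem_restrictRel.1 h2
          exact absurd hxU (hMnotU x hxM)
        · exact absurd hyM (Finset.disjoint_right.1 hMK h1.1)
  · -- induced relation
    ext r
    obtain ⟨x, y⟩ := r
    rw [mem_restrictRel, mem_restrictRel]
    constructor
    · rintro ⟨hQ', hxU, hyU⟩
      rcases mem_QOf.1 hQ' with h | ⟨hxM, -⟩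
      · obtain ⟨hxyp, -, -⟩ := mem_restrictRel.1 h
        exact ⟨hxyp, hxU, hyU⟩
      · exact absurd hxU (hMnotU x hxM)
    · rintro ⟨hxyp, hxU, hyU⟩
      exact ⟨mem_QOf.2 (Or.inl (mem_restrictRel.2 ⟨hxyp, hxU, hyU⟩)), hxU, hyU⟩
  · -- minimal elements
    ext a
    rw [mem_minset]
    constructor
    · rintro ⟨haMU, hamin⟩
      rcases Finset.mem_union.1 haMU with ha | ha
      · exact ha
      · obtain ⟨b, hb, hsd⟩ := mem_UOf.1 ha
        have hba : (b, a) ∈ QOf M K p f := mem_QOf.2 (Or.inr ⟨hb, Or.inr hsd⟩)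
        have : b = a := hamin b hba
        exact this ▸ hb
    · intro ha
      refine ⟨Finset.mem_union_left _ ha, ?_⟩
      intro y hya
      rcases mem_QOf.1 hya with h | ⟨hyM, h⟩
      · obtain ⟨-, -, haU⟩ := mem_restrictRel.1 h
        exact absurd haU (hMnotU a ha)
      · rcases h with h | h
        · exact h.symm
        · exact absurd (Finset.mem_sdiff.1 h).1 (Finset.disjoint_left.1 hMK ha)

lemma fOf_QOf (hMK : Disjoint M K)
    (hf : ∀ a (ha : a ∈ M), f a ha ∈ downsets K p) :
    (fun a (ha : a ∈ M) => fOf K (QOf M K p f) a) = f := by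
  funext a ha
  have hfaK : f a ha ⊆ K := (mem_downsets.1 (hf a ha)).1
  have haU : a ∉ UOf M K f := fun h =>
    Finset.disjoint_left.1 hMK ha (UOf_subset hf h)
  ext y
  rw [fOf, Finset.mem_filter]
  constructor
  · rintro ⟨hyK, hnot⟩
    by_contra hyf
    exact hnot (mem_QOf.2 (Or.inr ⟨ha, Or.inr (Finset.mem_sdiff.2 ⟨hyK, hyf⟩)⟩))
  · intro hyf
    refine ⟨hfaK hyf, fun hQ => ?_⟩
    rcases mem_QOf.1 hQ with h | ⟨ha', h⟩
    · exact haU (mem_restrictRel.1 h).2.1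
    · rcases h with h | h
      · exact Finset.disjoint_left.1 hMK ha (h ▸ hfaK hyf)
      · exact (Finset.mem_sdiff.1 h).2 hyf

end Forward

end Aux

/-- Theorem 5.1: `d(P)^m = Σ_{U upset of P} e(m, P|_U)`; equivalently
`d(P)^m − e(m,P) = Σ_{U proper upset of P} e(m, P|_U)`. -/
theorem stmt_14 (M K : Finset α) (hMK : Disjoint M K)
    (p : Finset (α × α)) (hp : IsPOon K p) :
    ((dnum K p) ^ M.card =
      ∑ U ∈ upsets K p, (extPOs M U (restrictRel p U)).card) ∧
    ((dnum K p) ^ M.card - (extPOs M K p).card =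
      ∑ U ∈ (upsets K p).erase K, (extPOs M U (restrictRel p U)).card) := by
  have key : (dnum K p) ^ M.card =
      ∑ U ∈ upsets K p, (extPOs M U (restrictRel p U)).card := by
    have h1 : (dnum K p) ^ M.card = (M.pi fun _ => downsets K p).card := by
      rw [Finset.card_pi, Finset.prod_const]
      rfl
    rw [h1, ← Finset.card_sigma]
    refine Finset.card_bij'
      (fun f _ => (⟨UOf M K f, QOf M K p f⟩ : Σ _ : Finset α, Finset (α × α)))
      (fun x _ => fun a _ => fOf K x.2 a) ?_ ?_ ?_ ?_
    · intro f hf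
      rw [Finset.mem_pi] at hf
      exact Finset.mem_sigma.2 ⟨UOf_mem_upsets hp hf, QOf_mem_extPOs hMK hp hf⟩
    · intro x hx
      rw [Finset.mem_sigma] at hx
      rw [Finset.mem_pi]
      intro a ha
      exact fOf_mem_downsets hMK hp hx.1 hx.2 a
    · intro f hf
      rw [Finset.mem_pi] at hf
      exact fOf_QOf hMK hf
    · intro x hx
      obtain ⟨U, Q⟩ := x
      rw [Finset.mem_sigma] at hx
      have hU : UOf M K (fun a _ => fOf K Q a) = U := UOf_fOf hMK hx.1 hx.2
      have hQ : QOf M K p (fun a _ => fOf K Q a) = Q := QOf_fOf hMK hx.1 hx.2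
      simp only [hU, hQ]
  have hK : K ∈ upsets K p :=
    mem_upsets.2 ⟨subset_rfl, fun x _ y hxy => (Finset.mem_product.1 (hp.1 hxy)).2⟩
  have hres : restrictRel p K = p := by
    apply Finset.filter_true_of_mem
    intro r hr
    have := Finset.mem_product.1 (hp.1 hr)
    exact ⟨this.1, this.2⟩
  refine ⟨key, ?_⟩
  rw [key, ← Finset.add_sum_erase _ _ hK, hres]
  omega
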